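/- arXiv:2404.05750 — 6 statements merged into one kernel-verified Lean document; each statement's English description precedes it below -/
import Mathlib

section
/- For every n ≥ 1, the n-kaleidoscope Xₙ = {-n,...,0,...,n} ⊆ ℤ, with negation inherited from ℤ, multivalued sum a+b = {a} if b ≠ -a and |b| ≤ |a|, a+b = {b} if b ≠ -a and |a| ≤ |b|, and a+(-a) = {-a,...,0,...,a}, and product a·b = sgn(ab)·max(|a|,|b|) for a,b ≠ 0 and a·b = 0 otherwise, is a multiring. -/
/-- A multiring structure (multivalued addition) on a carrier `R`. -/
structure MulRingOps (R : Type*) where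
  add : R → R → Set R
  mul : R → R → R
  neg : R → R
  zero : R
  one : R

namespace MulRingOps

variable {R : Type*}

/-- The multiring axioms. -/
structure IsMulRing (S : MulRingOps R) : Prop where
  add_nonempty : ∀ a b, (S.add a b).Nonempty
  add_comm : ∀ a b, S.add a b = S.add b a
  rev_left : ∀ {x y z}, z ∈ S.add x y → x ∈ S.add z (S.neg y)
  rev_right : ∀ {x y z}, z ∈ S.add x y → y ∈ S.add (S.neg x) z
  zero_add : ∀ x y, y ∈ S.add S.zero x ↔ x = y
  add_assoc : ∀ x y z : R,
    (⋃ w ∈ S.add y z, S.add x w) = (⋃ t ∈ S.add x y, S.add t z)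
  mul_comm : ∀ a b, S.mul a b = S.mul b a
  mul_assoc : ∀ a b c, S.mul (S.mul a b) c = S.mul a (S.mul b c)
  one_mul : ∀ a, S.mul S.one a = a
  mul_zero : ∀ a, S.mul a S.zero = S.zero
  distrib : ∀ {a b c : R} (d : R), c ∈ S.add a b →
    S.mul c d ∈ S.add (S.mul a d) (S.mul b d)

/-- A hyperfield: a multiring with `0 ≠ 1` in which every nonzero element is invertible. -/
structure IsHyperfield (S : MulRingOps R) extends IsMulRing S : Prop where
  zero_ne_one : S.zero ≠ S.one
  exists_inv : ∀ a, a ≠ S.zero → ∃ b, S.mul a b = S.one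

/-- A hyperfield is hyperbolic when `1 - 1` is everything. -/
def IsHyperbolic (S : MulRingOps R) : Prop :=
  S.add S.one (S.neg S.one) = Set.univ

/-- Morphisms of multirings. -/
def IsHom {A B : Type*} (S : MulRingOps A) (T : MulRingOps B) (f : A → B) : Prop :=
  (∀ {a b c}, c ∈ S.add a b → f c ∈ T.add (f a) (f b)) ∧
  (∀ a, f (S.neg a) = T.neg (f a)) ∧
  f S.zero = T.zero ∧
  (∀ a b, f (S.mul a b) = T.mul (f a) (f b)) ∧
  f S.one = T.one

end MulRingOps

/-- The carrier `Xₙ = {-n,...,0,...,n} ⊆ ℤ` of the n-kaleidoscope. -/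
def Kal (n : ℕ) := {x : ℤ // x.natAbs ≤ n}

open Classical in
/-- The kaleidoscope multivalued sum: `a+b = {a}` if `b ≠ -a` and `|b| ≤ |a|`,
`a+b = {b}` if `b ≠ -a` and `|a| ≤ |b|`, and `a+(-a) = {-a,...,0,...,a}`. -/
noncomputable def kalAdd {n : ℕ} (a b : Kal n) : Set (Kal n) :=
  if b.1 = -a.1 then {c | c.1.natAbs ≤ a.1.natAbs}
  else if b.1.natAbs ≤ a.1.natAbs then {a} else {b}

/-- The kaleidoscope product: `a·b = sgn(ab)·max(|a|,|b|)` (which is `0` when `a=0` or `b=0`). -/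
def kalMul {n : ℕ} (a b : Kal n) : Kal n :=
  ⟨(a.1 * b.1).sign * (max a.1.natAbs b.1.natAbs : ℤ), by
    have h : ((a.1 * b.1).sign * (max a.1.natAbs b.1.natAbs : ℤ)).natAbs ≤
        max a.1.natAbs b.1.natAbs := by
      rw [Int.natAbs_mul, Int.natAbs_sign]
      split
      · simp
      · rw [one_mul]; omega
    exact h.trans (max_le a.2 b.2)⟩

/-- The n-kaleidoscope multiring operations. -/
noncomputable def kalOps (n : ℕ) (hn : 1 ≤ n) : MulRingOps (Kal n) :=
  ⟨kalAdd, kalMul, fun a => ⟨-a.1, by simpa using a.2⟩, ⟨0, by simp⟩, ⟨1, by simpa using hn⟩⟩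


section KalHelpers

/-- Extensionality for `Kal`. -/
private lemma Kal.ext_iff' {n : ℕ} {a b : Kal n} : a = b ↔ a.1 = b.1 := Subtype.ext_iff

/-- Integer-level membership predicate for the kaleidoscope sum. -/
private def memAdd (x y z : ℤ) : Prop :=
  (y = -x ∧ z.natAbs ≤ x.natAbs) ∨ (y ≠ -x ∧ y.natAbs ≤ x.natAbs ∧ z = x) ∨
    (y ≠ -x ∧ x.natAbs < y.natAbs ∧ z = y)

private lemma mem_kalAdd {n : ℕ} {a b c : Kal n} :
    c ∈ kalAdd a b ↔ memAdd a.1 b.1 c.1 := by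
  unfold kalAdd memAdd
  split_ifs with h1 h2 <;>
    simp only [Set.mem_setOf_eq, Set.mem_singleton_iff, Kal.ext_iff'] <;> omega

/-- Symmetric description of the triple sum. -/
private def T3 (x y z c : ℤ) : Prop :=
  (((x = -y ∧ z.natAbs ≤ x.natAbs) ∨ (y = -z ∧ x.natAbs ≤ y.natAbs) ∨
      (z = -x ∧ y.natAbs ≤ z.natAbs)) ∧
    c.natAbs ≤ max x.natAbs (max y.natAbs z.natAbs)) ∨
  (c = x ∧ y.natAbs ≤ x.natAbs ∧ z.natAbs ≤ x.natAbs) ∨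
  (c = y ∧ x.natAbs ≤ y.natAbs ∧ z.natAbs ≤ y.natAbs) ∨
  (c = z ∧ x.natAbs ≤ z.natAbs ∧ y.natAbs ≤ z.natAbs)

set_option maxHeartbeats 2000000 in
private lemma kal_key (n : ℕ) (x y z c : ℤ) (hx : x.natAbs ≤ n) (hy : y.natAbs ≤ n)
    (hz : z.natAbs ≤ n) (hc : c.natAbs ≤ n) :
    (∃ w : ℤ, w.natAbs ≤ n ∧ memAdd y z w ∧ memAdd x w c) ↔ T3 x y z c := by
  constructor
  · rintro ⟨w, hw, h1, h2⟩
    unfold memAdd at h1 h2; unfold T3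
    rcases h1 with ⟨e1, l1⟩ | ⟨-, l1, e1⟩ | ⟨-, l1, e1⟩ <;>
      rcases h2 with ⟨e2, l2⟩ | ⟨-, l2, e2⟩ | ⟨-, l2, e2⟩ <;>
      subst e1 <;> omega
  · intro h
    unfold T3 at h
    unfold memAdd
    rcases h with ⟨hcan, hle⟩ | ⟨hc1, hy1, hz1⟩ | h | h
    · rcases hcan with h | h | h
      · exact ⟨y, hy, by omega, by omega⟩
      · by_cases hcx : c.natAbs ≤ x.natAbs
        · exact ⟨-x, by omega, by omega, by omega⟩
        · exact ⟨c, hc, by omega, by omega⟩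
      · exact ⟨z, hz, by omega, by omega⟩
    · by_cases hzy : z = -y
      · exact ⟨0, by omega, by omega, by omega⟩
      · by_cases h2 : z.natAbs ≤ y.natAbs
        · exact ⟨y, hy, by omega, by omega⟩
        · exact ⟨z, hz, by omega, by omega⟩
    · exact ⟨y, hy, by omega, by omega⟩
    · exact ⟨z, hz, by omega, by omega⟩

private lemma mem_biUnion_left {n : ℕ} {x y z c : Kal n} :
    (c ∈ ⋃ w ∈ kalAdd y z, kalAdd x w) ↔
      ∃ w : ℤ, w.natAbs ≤ n ∧ memAdd y.1 z.1 w ∧ memAdd x.1 w c.1 := by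
  simp only [Set.mem_iUnion, exists_prop]
  constructor
  · rintro ⟨w, hw1, hw2⟩
    exact ⟨w.1, w.2, mem_kalAdd.mp hw1, mem_kalAdd.mp hw2⟩
  · rintro ⟨w, hw, h1, h2⟩
    exact ⟨⟨w, hw⟩, mem_kalAdd.mpr h1, mem_kalAdd.mpr h2⟩

private lemma mem_biUnion_right {n : ℕ} {x y z c : Kal n} :
    (c ∈ ⋃ t ∈ kalAdd x y, kalAdd t z) ↔
      ∃ t : ℤ, t.natAbs ≤ n ∧ memAdd x.1 y.1 t ∧ memAdd t z.1 c.1 := by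
  simp only [Set.mem_iUnion, exists_prop]
  constructor
  · rintro ⟨t, ht1, ht2⟩
    exact ⟨t.1, t.2, mem_kalAdd.mp ht1, mem_kalAdd.mp ht2⟩
  · rintro ⟨t, ht, h1, h2⟩
    exact ⟨⟨t, ht⟩, mem_kalAdd.mpr h1, mem_kalAdd.mpr h2⟩

private lemma memAdd_comm {x y z : ℤ} : memAdd x y z ↔ memAdd y x z := by
  unfold memAdd; omega

private lemma T3_symm {x y z c : ℤ} : T3 z x y c ↔ T3 x y z c := by
  unfold T3
  constructor
  · rintro (⟨h | h | h, hl⟩ | h | h | h)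
    · exact Or.inl ⟨Or.inr (Or.inr h), by omega⟩
    · exact Or.inl ⟨Or.inl h, by omega⟩
    · exact Or.inl ⟨Or.inr (Or.inl h), by omega⟩
    · exact Or.inr (Or.inr (Or.inr h))
    · exact Or.inr (Or.inl ⟨h.1, h.2.2, h.2.1⟩)
    · exact Or.inr (Or.inr (Or.inl ⟨h.1, h.2.2, h.2.1⟩))
  · rintro (⟨h | h | h, hl⟩ | h | h | h)
    · exact Or.inl ⟨Or.inr (Or.inl h), by omega⟩
    · exact Or.inl ⟨Or.inr (Or.inr h), by omega⟩
    · exact Or.inl ⟨Or.inl h, by omega⟩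
    · exact Or.inr (Or.inr (Or.inl ⟨h.1, h.2.2, h.2.1⟩))
    · exact Or.inr (Or.inr (Or.inr ⟨h.1, h.2.2, h.2.1⟩))
    · exact Or.inr (Or.inl h)

/-- Integer-level kaleidoscope product. -/
private def kf (x y : ℤ) : ℤ := (x * y).sign * (max x.natAbs y.natAbs : ℤ)

private lemma kf_comm (x y : ℤ) : kf x y = kf y x := by
  unfold kf; rw [mul_comm x y, max_comm]

private lemma kf_zero (x : ℤ) : kf x 0 = 0 := by simp [kf]

private lemma kf_one (x : ℤ) : kf 1 x = x := by
  by_cases hx : x = 0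
  · simp [kf, hx]
  · unfold kf
    rw [one_mul, show max ((Int.natAbs 1 : ℕ) : ℤ) ((x.natAbs : ℕ) : ℤ) = (x.natAbs : ℤ) from by
      simp only [Int.natAbs_one]; omega, Int.sign_mul_natAbs]

private lemma kf_neg_left (x y : ℤ) : kf (-x) y = -(kf x y) := by
  unfold kf; rw [neg_mul, Int.sign_neg, Int.natAbs_neg, neg_mul]

private lemma natAbs_kf (x y : ℤ) :
    (kf x y).natAbs = if x = 0 ∨ y = 0 then 0 else max x.natAbs y.natAbs := by
  unfold kf
  rw [Int.natAbs_mul, Int.natAbs_sign,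
    show (max ((x.natAbs : ℕ) : ℤ) ((y.natAbs : ℕ) : ℤ)).natAbs = max x.natAbs y.natAbs from by
      omega]
  by_cases h : x = 0 ∨ y = 0
  · rw [if_pos (mul_eq_zero.mpr h), if_pos h, zero_mul]
  · rw [if_neg (fun hc => h (mul_eq_zero.mp hc)), if_neg h, one_mul]

private lemma sign_kf (x y : ℤ) : (kf x y).sign = x.sign * y.sign := by
  by_cases hx : x = 0
  · simp [kf, hx]
  by_cases hy : y = 0
  · simp [kf, hy]
  · unfold kf
    have hm : (0:ℤ) < max ((x.natAbs : ℕ) : ℤ) ((y.natAbs : ℕ) : ℤ) := by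
      have : x.natAbs ≠ 0 := Int.natAbs_ne_zero.mpr hx
      omega
    rw [Int.sign_mul, Int.sign_sign, Int.sign_eq_one_of_pos hm, mul_one, Int.sign_mul]

private lemma kf_natAbs_mono {x x' : ℤ} (y : ℤ) (h : x.natAbs ≤ x'.natAbs) :
    (kf x y).natAbs ≤ (kf x' y).natAbs := by
  rw [natAbs_kf, natAbs_kf]
  split_ifs <;> simp_all [Int.natAbs_eq_zero] <;> omega

private lemma kf_eq (x y : ℤ) : kf x y = x.sign * y.sign * (max x.natAbs y.natAbs : ℤ) := by
  unfold kf; rw [Int.sign_mul]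

private lemma kf_assoc (x y z : ℤ) : kf (kf x y) z = kf x (kf y z) := by
  rw [kf_eq (kf x y) z, kf_eq x (kf y z), sign_kf, sign_kf, natAbs_kf, natAbs_kf]
  by_cases hx : x = 0
  · simp [hx]
  by_cases hy : y = 0
  · simp [hy]
  by_cases hz : z = 0
  · simp [hz]
  · rw [if_neg (by tauto), if_neg (by tauto)]
    push_cast [Nat.cast_max]
    rw [max_assoc]; ring

end KalHelpers

/-- for every `n ≥ 1`, the n-kaleidoscope `Xₙ` is a multiring. -/
theorem kaleidoscope_isMulRing (n : ℕ) (hn : 1 ≤ n) : (kalOps n hn).IsMulRing := by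
  have hadd : (kalOps n hn).add = kalAdd := rfl
  have hmul : (kalOps n hn).mul = kalMul := rfl
  have hmulv : ∀ a b : Kal n, (kalMul a b).1 = kf a.1 b.1 := fun a b => rfl
  have hneg : ∀ a : Kal n, ((kalOps n hn).neg a).1 = -a.1 := fun a => rfl
  have hzero : ((kalOps n hn).zero).1 = 0 := rfl
  have hone : ((kalOps n hn).one).1 = 1 := rfl
  constructor
  · -- add_nonempty
    intro a b
    rw [hadd]
    by_cases h : b.1.natAbs ≤ a.1.natAbs
    · exact ⟨a, mem_kalAdd.mpr (by unfold memAdd; omega)⟩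
    · exact ⟨b, mem_kalAdd.mpr (by unfold memAdd; omega)⟩
  · -- add_comm
    intro a b
    rw [hadd]
    ext c
    rw [mem_kalAdd, mem_kalAdd]
    exact memAdd_comm
  · -- rev_left
    intro x y z h
    rw [hadd] at h ⊢
    rw [mem_kalAdd] at h ⊢
    rw [hneg]
    unfold memAdd at h ⊢
    omega
  · -- rev_right
    intro x y z h
    rw [hadd] at h ⊢
    rw [mem_kalAdd] at h ⊢
    rw [hneg]
    unfold memAdd at h ⊢
    omega
  · -- zero_add
    intro x y
    rw [hadd, mem_kalAdd, Kal.ext_iff']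
    unfold memAdd
    rw [hzero]
    omega
  · -- add_assoc
    intro x y z
    rw [hadd]
    ext c
    rw [mem_biUnion_left, mem_biUnion_right]
    rw [kal_key n _ _ _ _ x.2 y.2 z.2 c.2]
    have : ∀ t : ℤ, (memAdd x.1 y.1 t ∧ memAdd t z.1 c.1) ↔
        (memAdd x.1 y.1 t ∧ memAdd z.1 t c.1) := fun t => by rw [memAdd_comm (x := t)]
    constructor
    · intro h
      obtain ⟨t, ht, h1, h2⟩ := (kal_key n z.1 x.1 y.1 c.1 z.2 x.2 y.2 c.2).mpr
        (T3_symm.mpr h)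
      exact ⟨t, ht, h1, memAdd_comm.mp h2⟩
    · rintro ⟨t, ht, h1, h2⟩
      exact T3_symm.mp ((kal_key n z.1 x.1 y.1 c.1 z.2 x.2 y.2 c.2).mp
        ⟨t, ht, h1, memAdd_comm.mpr h2⟩)
  · -- mul_comm
    intro a b
    rw [hmul]
    exact Subtype.ext (kf_comm a.1 b.1)
  · -- mul_assoc
    intro a b c
    rw [hmul]
    exact Subtype.ext (kf_assoc a.1 b.1 c.1)
  · -- one_mul
    intro a
    rw [hmul]
    exact Subtype.ext (kf_one a.1)
  · -- mul_zero
    intro a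
    rw [hmul]
    exact Subtype.ext (kf_zero a.1)
  · -- distrib
    intro a b c d h
    rw [hadd, mem_kalAdd] at h ⊢
    rw [hmul, hmulv, hmulv, hmulv]
    unfold memAdd at h
    have hmono := fun (u v : Kal n) (huv : u.1.natAbs ≤ v.1.natAbs) =>
      kf_natAbs_mono d.1 huv
    rcases h with ⟨hb, hc⟩ | ⟨-, hba, hca⟩ | ⟨-, hab, hcb⟩
    · -- b = -a, |c| ≤ |a|
      have h1 : kf b.1 d.1 = -(kf a.1 d.1) := by rw [hb, kf_neg_left]
      have h2 : (kf c.1 d.1).natAbs ≤ (kf a.1 d.1).natAbs := kf_natAbs_mono d.1 hc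
      unfold memAdd
      omega
    · -- c = a, |b| ≤ |a|
      have h1 : (kf b.1 d.1).natAbs ≤ (kf a.1 d.1).natAbs := kf_natAbs_mono d.1 hba
      have h2 : kf c.1 d.1 = kf a.1 d.1 := by rw [hca]
      have h3 : kf b.1 d.1 = kf a.1 d.1 ∨ kf b.1 d.1 = -(kf a.1 d.1) ∨
          (kf b.1 d.1).natAbs ≠ (kf a.1 d.1).natAbs := by
        by_cases heq : (kf b.1 d.1).natAbs = (kf a.1 d.1).natAbs
        · rcases Int.natAbs_eq_natAbs_iff.mp heq with h | h
          · exact Or.inl h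
          · exact Or.inr (Or.inl h)
        · exact Or.inr (Or.inr heq)
      unfold memAdd
      omega
    · -- c = b, |a| < |b|
      have h1 : (kf a.1 d.1).natAbs ≤ (kf b.1 d.1).natAbs := kf_natAbs_mono d.1 (le_of_lt hab)
      have h2 : kf c.1 d.1 = kf b.1 d.1 := by rw [hcb]
      have h3 : kf b.1 d.1 = kf a.1 d.1 ∨ kf b.1 d.1 = -(kf a.1 d.1) ∨
          (kf b.1 d.1).natAbs ≠ (kf a.1 d.1).natAbs := by
        by_cases heq : (kf b.1 d.1).natAbs = (kf a.1 d.1).natAbs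
        · rcases Int.natAbs_eq_natAbs_iff.mp heq with h | h
          · exact Or.inl h
          · exact Or.inr (Or.inl h)
        · exact Or.inr (Or.inr heq)
      unfold memAdd
      omega
end

section
/- If F₁ and F₂ are hyperbolic hyperfields, then F₁ ×ₕ F₂ := (Ḟ₁ × Ḟ₂) ∪ {(0,0)}, with componentwise product and negation, and multivalued sum (a,b)+(c,d) = {(e,f) ∈ F₁ ×ₕ F₂ : e ∈ a+c and f ∈ b+d}, is a hyperbolic hyperfield. -/
namespace MulRingOps

variable {A B : Type*}

lemma IsMulRing.neg_zero' {S : MulRingOps A} (h : S.IsMulRing) : S.neg S.zero = S.zero := by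
  have h0 : S.zero ∈ S.add S.zero S.zero := (h.zero_add _ _).mpr rfl
  have h1 := h.rev_right h0
  rw [h.add_comm] at h1
  exact (h.zero_add _ _).mp h1

lemma IsMulRing.neg_neg' {S : MulRingOps A} (h : S.IsMulRing) (a : A) :
    S.neg (S.neg a) = a := by
  have h0 : a ∈ S.add S.zero a := (h.zero_add _ _).mpr rfl
  have h1 : S.zero ∈ S.add a (S.neg a) := h.rev_left h0
  have h2 : a ∈ S.add S.zero (S.neg (S.neg a)) := h.rev_left h1
  exact (h.zero_add _ _).mp h2

lemma IsMulRing.neg_ne_zero' {S : MulRingOps A} (h : S.IsMulRing) {a : A}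
    (ha : a ≠ S.zero) : S.neg a ≠ S.zero := by
  intro hcon
  apply ha
  rw [← h.neg_neg' a, hcon, h.neg_zero']

lemma IsHyperfield.mul_ne_zero' {S : MulRingOps A} (h : S.IsHyperfield) {a b : A}
    (ha : a ≠ S.zero) (hb : b ≠ S.zero) : S.mul a b ≠ S.zero := by
  intro hcon
  obtain ⟨a', ha'⟩ := h.exists_inv a ha
  apply hb
  calc b = S.mul S.one b := (h.one_mul b).symm
    _ = S.mul (S.mul a a') b := by rw [ha']
    _ = S.mul (S.mul a' a) b := by rw [h.mul_comm a a']
    _ = S.mul a' (S.mul a b) := h.mul_assoc _ _ _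
    _ = S.zero := by rw [hcon, h.mul_zero]

/-- The carrier `F₁ ×ₕ F₂ = (Ḟ₁ × Ḟ₂) ∪ {(0,0)}`, with `none` playing the role of `(0,0)`. -/
abbrev PCar (S : MulRingOps A) (T : MulRingOps B) :=
  Option ({a : A // a ≠ S.zero} × {b : B // b ≠ T.zero})

/-- First coordinate of an element of `F₁ ×ₕ F₂`. -/
def pFst (S : MulRingOps A) (T : MulRingOps B) : PCar S T → A
  | none => S.zero
  | some p => p.1.1

/-- Second coordinate of an element of `F₁ ×ₕ F₂`. -/
def pSnd (S : MulRingOps A) (T : MulRingOps B) : PCar S T → B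
  | none => T.zero
  | some p => p.2.1

/-- The multivalued sum on `F₁ ×ₕ F₂`:
`(a,b)+(c,d) = {(e,f) ∈ F₁ ×ₕ F₂ : e ∈ a+c and f ∈ b+d}`. -/
def prodAdd (S : MulRingOps A) (T : MulRingOps B) (x y : PCar S T) : Set (PCar S T) :=
  {z | pFst S T z ∈ S.add (pFst S T x) (pFst S T y) ∧
       pSnd S T z ∈ T.add (pSnd S T x) (pSnd S T y)}

/-- The hyperfield operations on `F₁ ×ₕ F₂`: componentwise product and negation,
and the multivalued sum `prodAdd`. -/
def prodOps {S : MulRingOps A} {T : MulRingOps B}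
    (hS : S.IsHyperfield) (hT : T.IsHyperfield) : MulRingOps (PCar S T) where
  add := prodAdd S T
  mul x y :=
    match x, y with
    | some p, some q =>
        some (⟨S.mul p.1.1 q.1.1, hS.mul_ne_zero' p.1.2 q.1.2⟩,
              ⟨T.mul p.2.1 q.2.1, hT.mul_ne_zero' p.2.2 q.2.2⟩)
    | _, _ => none
  neg := Option.map fun p =>
    (⟨S.neg p.1.1, hS.toIsMulRing.neg_ne_zero' p.1.2⟩,
     ⟨T.neg p.2.1, hT.toIsMulRing.neg_ne_zero' p.2.2⟩)
  zero := none
  one := some (⟨S.one, Ne.symm hS.zero_ne_one⟩, ⟨T.one, Ne.symm hT.zero_ne_one⟩)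

end MulRingOps

/-!
Every axiom of `F₁ ×ₕ F₂` is inherited coordinatewise except two, nonemptiness of sums and
associativity, which need an element of a sum in `F₁` and one of a sum in `F₂` that are both zero
or both nonzero. Hyperbolicity supplies it: a sum `a + b ∋ 0` with `(a, b) ≠ (0, 0)` is
`a - a = a (1 - 1)`, i.e. everything. So in `u ∈ (x + y) + z` a zero intermediate `t₁ ∈ x₁ + y₁`
facing a nonzero `t₂` can be replaced by any nonzero element of `u₁ - z₁`.
-/

namespace MulRingOps

variable {R A B : Type*}

section Hyperfield

variable {S : MulRingOps R}

theorem IsMulRing.zero_mul (h : S.IsMulRing) (a : R) : S.mul S.zero a = S.zero := by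
  rw [h.mul_comm, h.mul_zero]

theorem IsMulRing.mul_one (h : S.IsMulRing) (a : R) : S.mul a S.one = a := by
  rw [h.mul_comm, h.one_mul]

theorem IsMulRing.mem_add_zero_iff (h : S.IsMulRing) {x y : R} :
    y ∈ S.add x S.zero ↔ x = y := by
  rw [h.add_comm]
  exact h.zero_add x y

theorem IsMulRing.eq_neg_of_zero_mem_add (h : S.IsMulRing) {a b : R}
    (hab : S.zero ∈ S.add a b) : b = S.neg a :=
  (h.mem_add_zero_iff.mp (h.rev_right hab)).symm

theorem IsMulRing.neg_one_mul (h : S.IsMulRing) (a : R) : S.mul (S.neg S.one) a = S.neg a := by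
  have h0 : S.zero ∈ S.add S.one (S.neg S.one) := h.rev_left ((h.zero_add _ _).mpr rfl)
  have h1 := h.distrib a h0
  rw [h.zero_mul, h.one_mul] at h1
  exact h.eq_neg_of_zero_mem_add h1

theorem IsMulRing.exists_mem_add_mem_add (h : S.IsMulRing) {x y z w u : R}
    (hw : w ∈ S.add y z) (hu : u ∈ S.add x w) : ∃ t ∈ S.add x y, u ∈ S.add t z := by
  have hu' : u ∈ ⋃ t ∈ S.add x y, S.add t z := h.add_assoc x y z ▸ Set.mem_biUnion hw hu
  simpa only [Set.mem_iUnion, exists_prop] using hu'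

theorem add_assoc_of_subset (hcomm : ∀ a b, S.add a b = S.add b a)
    (hsub : ∀ x y z, (⋃ w ∈ S.add y z, S.add x w) ⊆ ⋃ t ∈ S.add x y, S.add t z) (x y z : R) :
    (⋃ w ∈ S.add y z, S.add x w) = ⋃ t ∈ S.add x y, S.add t z := by
  refine (hsub x y z).antisymm ?_
  calc (⋃ t ∈ S.add x y, S.add t z) = ⋃ t ∈ S.add y x, S.add z t := by
        simp only [hcomm x y, hcomm _ z]
    _ ⊆ ⋃ w ∈ S.add z y, S.add w x := hsub z y x
    _ = ⋃ w ∈ S.add y z, S.add x w := by simp only [hcomm z y, hcomm _ x]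

theorem IsHyperfield.ne_zero_of_mul_eq_one (h : S.IsHyperfield) {a b : R}
    (hab : S.mul a b = S.one) : b ≠ S.zero := by
  rintro rfl
  exact h.zero_ne_one (by rw [← hab, h.mul_zero])

theorem IsHyperfield.add_neg_self_eq_univ (h : S.IsHyperfield) (hh : IsHyperbolic S) {a : R}
    (ha : a ≠ S.zero) : S.add a (S.neg a) = Set.univ := by
  refine Set.eq_univ_of_forall fun c => ?_
  obtain ⟨b, hb⟩ := h.exists_inv a ha
  have hcb : S.mul c b ∈ S.add S.one (S.neg S.one) := hh ▸ Set.mem_univ _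
  have hc : S.mul (S.mul c b) a = c := by rw [h.mul_assoc, h.mul_comm b, hb, h.mul_one]
  simpa only [hc, h.one_mul, h.neg_one_mul] using h.distrib a hcb

theorem IsHyperfield.add_eq_univ_of_zero_mem (h : S.IsHyperfield) (hh : IsHyperbolic S)
    {a b : R} (hab : a ≠ S.zero ∨ b ≠ S.zero) (h0 : S.zero ∈ S.add a b) :
    S.add a b = Set.univ := by
  have hb := h.eq_neg_of_zero_mem_add h0
  have ha : a ≠ S.zero := by
    rintro rfl
    exact hab.elim (· rfl) (· (hb.trans h.neg_zero'))
  rw [hb, h.add_neg_self_eq_univ hh ha]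

theorem IsHyperfield.exists_ne_zero_mem_add (h : S.IsHyperfield) (hh : IsHyperbolic S)
    {a b : R} (hab : a ≠ S.zero ∨ b ≠ S.zero) : ∃ e ∈ S.add a b, e ≠ S.zero := by
  by_cases h0 : S.zero ∈ S.add a b
  · exact ⟨S.one, h.add_eq_univ_of_zero_mem hh hab h0 ▸ Set.mem_univ _, h.zero_ne_one.symm⟩
  · obtain ⟨e, he⟩ := h.add_nonempty a b
    exact ⟨e, he, fun he0 => h0 (he0 ▸ he)⟩

theorem IsHyperfield.exists_mem_add_eq_zero_iff (h : S.IsHyperfield) (hh : IsHyperbolic S)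
    (a b : R) : ∃ e ∈ S.add a b, (e = S.zero ↔ a = S.zero ∧ b = S.zero) := by
  by_cases hab : a = S.zero ∧ b = S.zero
  · obtain ⟨rfl, rfl⟩ := hab
    exact ⟨S.zero, (h.zero_add _ _).mpr rfl, iff_of_true rfl ⟨rfl, rfl⟩⟩
  · obtain ⟨e, he, he0⟩ := h.exists_ne_zero_mem_add hh (not_and_or.mp hab)
    exact ⟨e, he, iff_of_false he0 hab⟩

theorem IsHyperfield.exists_ne_zero_mem_add_mem_add (h : S.IsHyperfield) (hh : IsHyperbolic S)
    {x y z t u : R} (hxy : x ≠ S.zero ∨ y ≠ S.zero) (huz : u ≠ S.zero ∨ z ≠ S.zero)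
    (ht : t ∈ S.add x y) (hu : u ∈ S.add t z) :
    ∃ t' ∈ S.add x y, t' ≠ S.zero ∧ u ∈ S.add t' z := by
  by_cases ht0 : t = S.zero
  · subst ht0
    obtain ⟨t', ht', ht'0⟩ := h.exists_ne_zero_mem_add hh (huz.imp_right h.neg_ne_zero')
    refine ⟨t', h.add_eq_univ_of_zero_mem hh hxy ht ▸ Set.mem_univ _, ht'0, ?_⟩
    simpa only [h.neg_neg'] using h.rev_left ht'
  · exact ⟨t, ht, ht0, hu⟩

theorem IsHyperfield.exists_mem_add_mem_add_eq_zero_iff (h : S.IsHyperfield)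
    (hh : IsHyperbolic S) {x y z w u : R} (hw : w ∈ S.add y z) (hu : u ∈ S.add x w) :
    ∃ t ∈ S.add x y, u ∈ S.add t z ∧
      (t = S.zero ↔ (x = S.zero ∧ y = S.zero) ∨ (u = S.zero ∧ z = S.zero)) := by
  obtain ⟨t, ht, hu⟩ := h.exists_mem_add_mem_add hw hu
  by_cases hdeg : (x = S.zero ∧ y = S.zero) ∨ (u = S.zero ∧ z = S.zero)
  · refine ⟨t, ht, hu, iff_of_true ?_ hdeg⟩
    rcases hdeg with ⟨rfl, rfl⟩ | ⟨rfl, rfl⟩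
    · exact ((h.zero_add _ _).mp ht).symm
    · exact h.mem_add_zero_iff.mp hu
  · obtain ⟨hxy, huz⟩ := not_or.mp hdeg
    obtain ⟨t', ht', ht'0, hu'⟩ :=
      h.exists_ne_zero_mem_add_mem_add hh (not_and_or.mp hxy) (not_and_or.mp huz) ht hu
    exact ⟨t', ht', hu', iff_of_false ht'0 hdeg⟩

end Hyperfield

section Product

variable {S : MulRingOps A} {T : MulRingOps B}

@[simp]
theorem mem_prodAdd {x y z : PCar S T} :
    z ∈ prodAdd S T x y ↔ pFst S T z ∈ S.add (pFst S T x) (pFst S T y) ∧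
      pSnd S T z ∈ T.add (pSnd S T x) (pSnd S T y) :=
  Iff.rfl

theorem pFst_eq_zero_iff {x : PCar S T} : pFst S T x = S.zero ↔ x = none := by
  cases x with
  | none => exact iff_of_true rfl rfl
  | some p => exact iff_of_false p.1.2 (Option.some_ne_none p)

theorem pSnd_eq_zero_iff {x : PCar S T} : pSnd S T x = T.zero ↔ x = none := by
  cases x with
  | none => exact iff_of_true rfl rfl
  | some p => exact iff_of_false p.2.2 (Option.some_ne_none p)

theorem ext_pFst_pSnd {x y : PCar S T} (h₁ : pFst S T x = pFst S T y)
    (h₂ : pSnd S T x = pSnd S T y) : x = y := by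
  rcases x with _ | p <;> rcases y with _ | q
  · rfl
  · exact absurd h₁.symm q.1.2
  · exact absurd h₁ p.1.2
  · exact congrArg some (Prod.ext (Subtype.ext h₁) (Subtype.ext h₂))

theorem exists_pFst_pSnd_eq {a : A} {b : B} (h : a = S.zero ↔ b = T.zero) :
    ∃ t : PCar S T, pFst S T t = a ∧ pSnd S T t = b := by
  by_cases ha : a = S.zero
  · exact ⟨none, ha.symm, (h.mp ha).symm⟩
  · exact ⟨some (⟨a, ha⟩, ⟨b, mt h.mpr ha⟩), rfl, rfl⟩

theorem prodAdd_comm (hS : S.IsMulRing) (hT : T.IsMulRing) (x y : PCar S T) :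
    prodAdd S T x y = prodAdd S T y x := by
  ext
  simp only [mem_prodAdd, hS.add_comm (pFst S T x), hT.add_comm (pSnd S T x)]

theorem prodAdd_nonempty (hS : S.IsHyperfield) (hT : T.IsHyperfield) (hSh : IsHyperbolic S)
    (hTh : IsHyperbolic T) (x y : PCar S T) : (prodAdd S T x y).Nonempty := by
  obtain ⟨e, he, he0⟩ := hS.exists_mem_add_eq_zero_iff hSh (pFst S T x) (pFst S T y)
  obtain ⟨f, hf, hf0⟩ := hT.exists_mem_add_eq_zero_iff hTh (pSnd S T x) (pSnd S T y)
  obtain ⟨z, rfl, rfl⟩ := exists_pFst_pSnd_eq (S := S) (T := T) (a := e) (b := f) (by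
    rw [he0, hf0]
    simp only [pFst_eq_zero_iff, pSnd_eq_zero_iff])
  exact ⟨z, he, hf⟩

theorem prodAdd_assoc_subset (hS : S.IsHyperfield) (hT : T.IsHyperfield)
    (hSh : IsHyperbolic S) (hTh : IsHyperbolic T) (x y z : PCar S T) :
    (⋃ w ∈ prodAdd S T y z, prodAdd S T x w) ⊆ ⋃ t ∈ prodAdd S T x y, prodAdd S T t z := by
  intro u hu
  simp only [Set.mem_iUnion, exists_prop, mem_prodAdd] at hu ⊢
  obtain ⟨w, ⟨hw₁, hw₂⟩, hu₁, hu₂⟩ := hu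
  obtain ⟨t₁, ht₁, hu₁, ht₁0⟩ := hS.exists_mem_add_mem_add_eq_zero_iff hSh hw₁ hu₁
  obtain ⟨t₂, ht₂, hu₂, ht₂0⟩ := hT.exists_mem_add_mem_add_eq_zero_iff hTh hw₂ hu₂
  obtain ⟨t, rfl, rfl⟩ := exists_pFst_pSnd_eq (S := S) (T := T) (a := t₁) (b := t₂) (by
    rw [ht₁0, ht₂0]
    simp only [pFst_eq_zero_iff, pSnd_eq_zero_iff])
  exact ⟨t, ⟨ht₁, ht₂⟩, hu₁, hu₂⟩

theorem mem_prodAdd_none_iff (hS : S.IsMulRing) (hT : T.IsMulRing) {x y : PCar S T} :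
    y ∈ prodAdd S T none x ↔ x = y := by
  refine ⟨fun h => ext_pFst_pSnd ((hS.zero_add _ _).mp h.1) ((hT.zero_add _ _).mp h.2), ?_⟩
  rintro rfl
  exact ⟨(hS.zero_add _ _).mpr rfl, (hT.zero_add _ _).mpr rfl⟩

theorem pFst_neg (hS : S.IsHyperfield) (hT : T.IsHyperfield) (x : PCar S T) :
    pFst S T ((prodOps hS hT).neg x) = S.neg (pFst S T x) := by
  cases x with
  | none => exact hS.neg_zero'.symm
  | some p => rfl

theorem pSnd_neg (hS : S.IsHyperfield) (hT : T.IsHyperfield) (x : PCar S T) :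
    pSnd S T ((prodOps hS hT).neg x) = T.neg (pSnd S T x) := by
  cases x with
  | none => exact hT.neg_zero'.symm
  | some p => rfl

theorem pFst_mul (hS : S.IsHyperfield) (hT : T.IsHyperfield) (x y : PCar S T) :
    pFst S T ((prodOps hS hT).mul x y) = S.mul (pFst S T x) (pFst S T y) := by
  rcases x with _ | p <;> rcases y with _ | q
  · exact (hS.mul_zero _).symm
  · exact (hS.zero_mul _).symm
  · exact (hS.mul_zero _).symm
  · rfl

theorem pSnd_mul (hS : S.IsHyperfield) (hT : T.IsHyperfield) (x y : PCar S T) :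
    pSnd S T ((prodOps hS hT).mul x y) = T.mul (pSnd S T x) (pSnd S T y) := by
  rcases x with _ | p <;> rcases y with _ | q
  · exact (hT.mul_zero _).symm
  · exact (hT.zero_mul _).symm
  · exact (hT.mul_zero _).symm
  · rfl

theorem prodOps_isMulRing (hS : S.IsHyperfield) (hT : T.IsHyperfield) (hSh : IsHyperbolic S)
    (hTh : IsHyperbolic T) : (prodOps hS hT).IsMulRing where
  add_nonempty := prodAdd_nonempty hS hT hSh hTh
  add_comm := prodAdd_comm hS.toIsMulRing hT.toIsMulRing
  rev_left h :=
    ⟨(pFst_neg hS hT _).symm ▸ hS.rev_left h.1, (pSnd_neg hS hT _).symm ▸ hT.rev_left h.2⟩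
  rev_right h :=
    ⟨(pFst_neg hS hT _).symm ▸ hS.rev_right h.1, (pSnd_neg hS hT _).symm ▸ hT.rev_right h.2⟩
  zero_add _ _ := mem_prodAdd_none_iff hS.toIsMulRing hT.toIsMulRing
  add_assoc := add_assoc_of_subset (prodAdd_comm hS.toIsMulRing hT.toIsMulRing)
    (prodAdd_assoc_subset hS hT hSh hTh)
  mul_comm x y := ext_pFst_pSnd (by simp only [pFst_mul, hS.mul_comm])
    (by simp only [pSnd_mul, hT.mul_comm])
  mul_assoc x y z := ext_pFst_pSnd (by simp only [pFst_mul, hS.mul_assoc])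
    (by simp only [pSnd_mul, hT.mul_assoc])
  one_mul x := ext_pFst_pSnd ((pFst_mul hS hT _ _).trans (hS.one_mul _))
    ((pSnd_mul hS hT _ _).trans (hT.one_mul _))
  mul_zero x := by cases x <;> rfl
  distrib d h := ⟨by simpa only [pFst_mul] using hS.distrib (pFst S T d) h.1,
    by simpa only [pSnd_mul] using hT.distrib (pSnd S T d) h.2⟩

theorem prodOps_exists_inv (hS : S.IsHyperfield) (hT : T.IsHyperfield) (x : PCar S T)
    (hx : x ≠ none) : ∃ y, (prodOps hS hT).mul x y = (prodOps hS hT).one := by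
  obtain ⟨p, rfl⟩ := Option.ne_none_iff_exists'.mp hx
  obtain ⟨a, ha⟩ := hS.exists_inv p.1.1 p.1.2
  obtain ⟨b, hb⟩ := hT.exists_inv p.2.1 p.2.2
  exact ⟨some (⟨a, hS.ne_zero_of_mul_eq_one ha⟩, ⟨b, hT.ne_zero_of_mul_eq_one hb⟩),
    ext_pFst_pSnd ha hb⟩

theorem prodOps_isHyperbolic (hS : S.IsHyperfield) (hT : T.IsHyperfield)
    (hSh : IsHyperbolic S) (hTh : IsHyperbolic T) : IsHyperbolic (prodOps hS hT) :=
  Set.eq_univ_of_forall fun u =>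
    ⟨hSh ▸ Set.mem_univ (pFst S T u), hTh ▸ Set.mem_univ (pSnd S T u)⟩

end Product

end MulRingOps

open MulRingOps in
/-- if `F₁`, `F₂` are hyperbolic hyperfields then
`F₁ ×ₕ F₂ = (Ḟ₁ × Ḟ₂) ∪ {(0,0)}` with componentwise product and negation and the sum
`(a,b)+(c,d) = {(e,f) ∈ F₁ ×ₕ F₂ : e ∈ a+c, f ∈ b+d}` is a hyperbolic hyperfield. -/
theorem prod_isHyperbolicHyperfield {A B : Type*} {S : MulRingOps A} {T : MulRingOps B}
    (hS : S.IsHyperfield) (hT : T.IsHyperfield)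
    (hSh : IsHyperbolic S) (hTh : IsHyperbolic T) :
    (prodOps hS hT).IsHyperfield ∧ IsHyperbolic (prodOps hS hT) :=
  ⟨{ prodOps_isMulRing hS hT hSh hTh with
      zero_ne_one := (Option.some_ne_none _).symm
      exists_inv := prodOps_exists_inv hS hT },
    prodOps_isHyperbolic hS hT hSh hTh⟩
end

section
/- Marshall's quotient satisfies the universal property: if A, B are multirings, S ⊆ A a multiplicative subset, and f : A → B a multiring morphism with f[S] = {1}, then there is a unique multiring morphism f̃ : A/ₘS → B with f̃ ∘ π = f, where π : A → A/ₘS is the canonical projection. -/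
namespace MulRingOps

variable {A : Type*}

/-- The Marshall relation: `a ~ b` iff `as = bt` for some `s, t ∈ S`. -/
def mrel (S : MulRingOps A) (Sub : Set A) (a b : A) : Prop :=
  ∃ s ∈ Sub, ∃ t ∈ Sub, S.mul a s = S.mul b t

/-- The carrier of the Marshall quotient `A/ₘS`. -/
abbrev MQuot (S : MulRingOps A) (Sub : Set A) := Quot (mrel S Sub)

/-- The multivalued sum on the Marshall quotient:
`ā + b̄ = {c̄ : cv ∈ as + bt for some s,t,v ∈ S}`. -/
def mAdd (S : MulRingOps A) (Sub : Set A) (x y : MQuot S Sub) : Set (MQuot S Sub) :=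
  {z | ∃ a b c : A, x = Quot.mk _ a ∧ y = Quot.mk _ b ∧ z = Quot.mk _ c ∧
    ∃ s ∈ Sub, ∃ t ∈ Sub, ∃ v ∈ Sub, S.mul c v ∈ S.add (S.mul a s) (S.mul b t)}

/-- `MSpec S Sub ops` says that `ops` is a multiring-operations structure on `A/ₘS`
implementing Marshall's quotient operations. -/
def MSpec (S : MulRingOps A) (Sub : Set A) (ops : MulRingOps (MQuot S Sub)) : Prop :=
  ops.add = mAdd S Sub ∧
  (∀ a b : A, ops.mul (Quot.mk _ a) (Quot.mk _ b) = Quot.mk _ (S.mul a b)) ∧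
  (∀ a : A, ops.neg (Quot.mk _ a) = Quot.mk _ (S.neg a)) ∧
  ops.zero = Quot.mk _ S.zero ∧
  ops.one = Quot.mk _ S.one

end MulRingOps

open MulRingOps in
/-- universal property of Marshall's quotient: a multiring morphism
`f : A → B` with `f[S] = {1}` factors uniquely through the projection `π : A → A/ₘS`. -/
theorem marshall_quotient_universalProperty {A B : Type*}
    (S : MulRingOps A) (h : S.IsMulRing)
    (Sub : Set A) (hone : S.one ∈ Sub)
    (hmul : ∀ a ∈ Sub, ∀ b ∈ Sub, S.mul a b ∈ Sub)
    (T : MulRingOps B) (hT : T.IsMulRing)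
    (f : A → B) (hf : IsHom S T f) (hfS : f '' Sub = {T.one})
    (ops : MulRingOps (MQuot S Sub)) (hops : MSpec S Sub ops) (hops' : ops.IsMulRing) :
    ∃! g : MQuot S Sub → B, IsHom ops T g ∧ g ∘ (Quot.mk _) = f := by
  obtain ⟨haddS, hnegS, hzeroS, hmulS, honeS⟩ := hf
  obtain ⟨hoadd, homul, honeg, hozero, hoone⟩ := hops
  have hfs : ∀ s ∈ Sub, f s = T.one := fun s hs => by
    have : f s ∈ f '' Sub := ⟨s, hs, rfl⟩
    rw [hfS] at this; exact this
  have hmul1 : ∀ x : B, T.mul x T.one = x := fun x => by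
    rw [hT.mul_comm, hT.one_mul]
  have hresp : ∀ a b, mrel S Sub a b → f a = f b := by
    rintro a b ⟨s, hs, t, ht, hst⟩
    have := congrArg f hst
    rwa [hmulS, hmulS, hfs s hs, hfs t ht, hmul1, hmul1] at this
  refine ⟨Quot.lift f hresp, ⟨⟨?_, ?_, ?_, ?_, ?_⟩, rfl⟩, ?_⟩
  · intro x y z hz
    rw [hoadd] at hz
    obtain ⟨a, b, c, rfl, rfl, rfl, s, hs, t, ht, v, hv, hmem⟩ := hz
    have h1 : f (S.mul c v) ∈ T.add (f (S.mul a s)) (f (S.mul b t)) := haddS hmem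
    rwa [hmulS, hmulS, hmulS, hfs s hs, hfs t ht, hfs v hv, hmul1, hmul1, hmul1] at h1
  · intro a
    induction a using Quot.ind with
    | _ a => rw [honeg]; exact hnegS a
  · rw [hozero]; exact hzeroS
  · intro a b
    induction a using Quot.ind with
    | _ a =>
      induction b using Quot.ind with
      | _ b => rw [homul]; exact hmulS a b
  · rw [hoone]; exact honeS
  · rintro g' ⟨_, hg'⟩
    funext x
    induction x using Quot.ind with
    | _ a => exact congrFun hg' a
end

section
/- Let F be a hyperbolic hyperfield. In K₂F, ρ(a)ρ(-a) = 0 for all nonzero a ∈ F, where K₂F is the quotient of K₁F ⊗ K₁F by the subgroup generated by ρ(a) ⊗ ρ(b) with b ∈ 1-a, and ρ : Ḟ → K₁F is the logarithm isomorphism onto the multiplicative group of F written additively. -/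
namespace MulRingOps

variable {F : Type*}

open FreeAbelianGroup in
/-- The subgroup of relations defining `KₙF`: tuples with a zero entry are degenerate,
multilinearity in each slot, and the Steinberg-type relations `ρ(a)⊗ρ(b)` with `b ∈ 1-a`. -/
def krel (S : MulRingOps F) (n : ℕ) : AddSubgroup (FreeAbelianGroup (Fin n → F)) :=
  AddSubgroup.closure
    ({x | ∃ v : Fin n → F, (∃ i, v i = S.zero) ∧ x = of v} ∪
     {x | ∃ (v : Fin n → F) (i : Fin n) (b c : F), b ≠ S.zero ∧ c ≠ S.zero ∧
        x = of (Function.update v i (S.mul b c)) - of (Function.update v i b) -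
            of (Function.update v i c)} ∪
     {x | ∃ v : Fin n → F, (∀ j, v j ≠ S.zero) ∧
        (∃ i j : Fin n, i ≠ j ∧ v i ∈ S.add S.one (S.neg (v j))) ∧ x = of v})

/-- `KₙF`: the n-th K-theory group of the hyperfield `F`, presented as the n-fold tensor
power of `K₁F = Ḟ` (written additively) modulo the Steinberg-type relations. -/
abbrev KGroup (S : MulRingOps F) (n : ℕ) :=
  FreeAbelianGroup (Fin n → F) ⧸ krel S n

/-- The generator `ρ(v 0)⋯ρ(v (n-1))` of `KₙF`. -/
def kgen (S : MulRingOps F) (n : ℕ) (v : Fin n → F) : KGroup S n :=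
  QuotientAddGroup.mk (FreeAbelianGroup.of v)

end MulRingOps

open MulRingOps in
/-- in `K₂F` of a hyperbolic hyperfield `F`, `ρ(a)ρ(-a) = 0`
for every nonzero `a`. -/
theorem ktheory_rho_neg_self {F : Type*} (S : MulRingOps F)
    (h : S.IsHyperfield) (hyp : IsHyperbolic S) :
    ∀ a : F, a ≠ S.zero → kgen S 2 ![a, S.neg a] = 0 := by
  intro a ha
  obtain ⟨b, hb⟩ := h.exists_inv a ha
  have hM := h.toIsMulRing
  have h01 : S.zero ∈ S.add S.one (S.neg S.one) := by rw [hyp]; trivial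
  have hdist := hM.distrib a h01
  have h0a : S.mul S.zero a = S.zero := by rw [hM.mul_comm]; exact hM.mul_zero a
  have h1a : S.mul S.one a = a := hM.one_mul a
  rw [h0a, h1a] at hdist
  have hneg : S.neg a = S.mul (S.neg S.one) a := by
    have h2 := hM.rev_right hdist
    rw [hM.add_comm] at h2
    exact (hM.zero_add _ _).mp h2
  have hbmem : b ∈ S.add S.one (S.neg S.one) := by rw [hyp]; trivial
  have h2 := hM.distrib a hbmem
  rw [h1a, ← hneg] at h2
  have hba : S.mul b a = S.one := by rw [hM.mul_comm]; exact hb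
  rw [hba, hM.add_comm] at h2
  have hst : S.neg a ∈ S.add S.one (S.neg a) := hM.rev_left h2
  have hne1 : S.neg S.one ≠ S.zero := by
    intro h0
    have hz : S.zero ∈ S.add S.zero S.one := by
      rw [hM.add_comm]; simpa [h0] using h01
    exact h.zero_ne_one ((hM.zero_add S.one S.zero).mp hz).symm
  have hna : S.neg a ≠ S.zero := by
    intro h0
    apply hne1
    have hz : S.mul (S.mul (S.neg S.one) a) b = S.zero := by
      rw [← hneg, h0, hM.mul_comm]; exact hM.mul_zero b
    rwa [hM.mul_assoc, hb, hM.mul_comm, hM.one_mul] at hz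
  apply (QuotientAddGroup.eq_zero_iff _).mpr
  apply AddSubgroup.subset_closure
  right
  refine ⟨![a, S.neg a], ?_, ⟨1, 0, by decide, by simpa using hst⟩, rfl⟩
  intro j; fin_cases j <;> simpa using ‹_›
end

section
/- Let F be a hyperbolic hyperfield. In K₂F, ρ(a)ρ(b) = -ρ(b)ρ(a) for all nonzero a,b ∈ F; consequently ρ(a)² = ρ(a)ρ(-1) in K₂F. -/
namespace MulRingOps

section Aux
variable {F : Type*} {S : MulRingOps F}

lemma aux_neg_zero (h : S.IsMulRing) : S.neg S.zero = S.zero := by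
  have h0 : S.zero ∈ S.add S.zero S.zero := (h.zero_add _ _).mpr rfl
  exact (h.zero_add _ _).mp (h.rev_left h0)

lemma aux_neg_neg (h : S.IsMulRing) (a : F) : S.neg (S.neg a) = a := by
  have h0 : a ∈ S.add S.zero a := (h.zero_add _ _).mpr rfl
  have h1 : S.zero ∈ S.add a (S.neg a) := h.rev_left h0
  exact (h.zero_add _ _).mp (h.rev_left h1)

lemma aux_neg_of_zero_mem (h : S.IsMulRing) {a b : F}
    (hab : S.zero ∈ S.add a b) : b = S.neg a := by
  have := (h.zero_add _ _).mp (h.rev_left hab)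
  rw [← this, aux_neg_neg h]

lemma aux_neg_one_mul (h : S.IsMulRing) (c : F) :
    S.mul (S.neg S.one) c = S.neg c := by
  have h0 : S.one ∈ S.add S.zero S.one := (h.zero_add _ _).mpr rfl
  have h1 : S.zero ∈ S.add S.one (S.neg S.one) := h.rev_left h0
  have h2 := h.distrib c h1
  rw [h.one_mul, h.mul_comm S.zero c, h.mul_zero] at h2
  exact aux_neg_of_zero_mem h h2

lemma aux_neg_ne_zero (h : S.IsMulRing) {a : F} (ha : a ≠ S.zero) :
    S.neg a ≠ S.zero := by
  intro hn
  apply ha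
  rw [← aux_neg_neg h a, hn, aux_neg_zero h]

lemma aux_mul_ne_zero (h : S.IsHyperfield) {a b : F} (ha : a ≠ S.zero)
    (hb : b ≠ S.zero) : S.mul a b ≠ S.zero := by
  obtain ⟨a', ha'⟩ := h.exists_inv a ha
  intro hab
  apply hb
  calc b = S.mul (S.mul a' a) b := by rw [h.mul_comm a' a, ha', h.one_mul]
  _ = S.mul a' (S.mul a b) := h.mul_assoc _ _ _
  _ = S.zero := by rw [hab, h.mul_zero]

/-- Hyperbolicity: `1 ∈ c - c` for nonzero `c`. -/
lemma aux_one_mem (h : S.IsHyperfield) (hyp : IsHyperbolic S) {c : F}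
    (hc : c ≠ S.zero) : S.one ∈ S.add c (S.neg c) := by
  obtain ⟨c', hc'⟩ := h.exists_inv c hc
  have h1 : c' ∈ S.add S.one (S.neg S.one) := by rw [hyp]; trivial
  have h2 := h.distrib c h1
  rw [h.one_mul, aux_neg_one_mul h.toIsMulRing, h.mul_comm c' c, hc'] at h2
  exact h2

/-- Hyperbolicity: `c ∈ 1 + c` for nonzero `c`. -/
lemma aux_self_mem (h : S.IsHyperfield) (hyp : IsHyperbolic S) {c : F}
    (hc : c ≠ S.zero) : c ∈ S.add S.one (S.neg (S.neg c)) :=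
  h.rev_left (aux_one_mem h hyp hc)

end Aux
end MulRingOps


namespace MulRingOps

section KAux
variable {F : Type*} (S : MulRingOps F)

lemma kgen_deg {n : ℕ} (v : Fin n → F) (i : Fin n) (hv : v i = S.zero) :
    kgen S n v = 0 := by
  apply (QuotientAddGroup.eq_zero_iff _).mpr
  exact AddSubgroup.subset_closure (Or.inl (Or.inl ⟨v, ⟨i, hv⟩, rfl⟩))

lemma kgen_stein {n : ℕ} (v : Fin n → F) (hv : ∀ j, v j ≠ S.zero)
    {i j : Fin n} (hij : i ≠ j) (hmem : v i ∈ S.add S.one (S.neg (v j))) :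
    kgen S n v = 0 := by
  apply (QuotientAddGroup.eq_zero_iff _).mpr
  exact AddSubgroup.subset_closure (Or.inr ⟨v, hv, ⟨i, j, hij, hmem⟩, rfl⟩)

lemma kgen_update {n : ℕ} (v : Fin n → F) (i : Fin n) {b c : F}
    (hb : b ≠ S.zero) (hc : c ≠ S.zero) :
    kgen S n (Function.update v i (S.mul b c)) =
      kgen S n (Function.update v i b) + kgen S n (Function.update v i c) := by
  have hmem : FreeAbelianGroup.of (Function.update v i (S.mul b c)) -
      FreeAbelianGroup.of (Function.update v i b) -
      FreeAbelianGroup.of (Function.update v i c) ∈ krel S n :=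
    AddSubgroup.subset_closure (Or.inl (Or.inr ⟨v, i, b, c, hb, hc, rfl⟩))
  have h0 := (QuotientAddGroup.eq_zero_iff _).mpr hmem
  rw [QuotientAddGroup.mk_sub, QuotientAddGroup.mk_sub, sub_sub, sub_eq_zero] at h0
  exact h0

lemma upd0 (a b x : F) : Function.update ![a, b] 0 x = ![x, b] := by
  funext i; fin_cases i <;> simp [Function.update]

lemma upd1 (a b x : F) : Function.update ![a, b] 1 x = ![a, x] := by
  funext i; fin_cases i <;> simp [Function.update]

lemma kgen_mul_left {a b c : F} (hb : b ≠ S.zero) (hc : c ≠ S.zero) :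
    kgen S 2 ![S.mul b c, a] = kgen S 2 ![b, a] + kgen S 2 ![c, a] := by
  have := kgen_update S ![b, a] 0 hb hc
  rwa [upd0, upd0, upd0] at this

lemma kgen_mul_right {a b c : F} (hb : b ≠ S.zero) (hc : c ≠ S.zero) :
    kgen S 2 ![a, S.mul b c] = kgen S 2 ![a, b] + kgen S 2 ![a, c] := by
  have := kgen_update S ![a, b] 1 hb hc
  rwa [upd1, upd1, upd1] at this

end KAux
end MulRingOps

namespace MulRingOps

lemma kgen_self_neg {F : Type*} {S : MulRingOps F} (h : S.IsHyperfield)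
    (hyp : IsHyperbolic S) {c : F} (hc : c ≠ S.zero) :
    kgen S 2 ![c, S.neg c] = 0 := by
  apply kgen_stein S ![c, S.neg c] ?_ (i := 0) (j := 1) (by decide)
  · simpa using aux_self_mem h hyp hc
  · intro j
    fin_cases j <;> simp [hc, aux_neg_ne_zero h.toIsMulRing hc]

end MulRingOps

open MulRingOps in
/-- in `K₂F` of a hyperbolic hyperfield `F`, `ρ(a)ρ(b) = -ρ(b)ρ(a)`
for all nonzero `a, b`; consequently `ρ(a)² = ρ(a)ρ(-1)`. -/
theorem ktheory_anticomm {F : Type*} (S : MulRingOps F)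
    (h : S.IsHyperfield) (hyp : IsHyperbolic S) :
    ∀ a b : F, a ≠ S.zero → b ≠ S.zero →
      kgen S 2 ![a, b] = - kgen S 2 ![b, a] ∧
      kgen S 2 ![a, a] = kgen S 2 ![a, S.neg S.one] := by
  intro a b ha hb
  have hm := h.toIsMulRing
  have na : S.neg a ≠ S.zero := aux_neg_ne_zero hm ha
  have nb : S.neg b ≠ S.zero := aux_neg_ne_zero hm hb
  have n1 : S.neg S.one ≠ S.zero := aux_neg_ne_zero hm (Ne.symm h.zero_ne_one)
  constructor
  · have h3 : S.neg (S.mul a b) = S.mul (S.neg a) b := by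
      calc S.neg (S.mul a b) = S.mul (S.neg S.one) (S.mul a b) :=
            (aux_neg_one_mul hm _).symm
        _ = S.mul (S.mul (S.neg S.one) a) b := (hm.mul_assoc _ _ _).symm
        _ = S.mul (S.neg a) b := by rw [aux_neg_one_mul hm]
    have h6 : S.neg (S.mul a b) = S.mul (S.neg b) a := by
      calc S.neg (S.mul a b) = S.mul (S.neg S.one) (S.mul b a) := by
            rw [hm.mul_comm b a]; exact (aux_neg_one_mul hm _).symm
        _ = S.mul (S.mul (S.neg S.one) b) a := (hm.mul_assoc _ _ _).symm
        _ = S.mul (S.neg b) a := by rw [aux_neg_one_mul hm]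
    have e1 : kgen S 2 ![S.mul a b, S.neg (S.mul a b)] = 0 :=
      kgen_self_neg h hyp (aux_mul_ne_zero h ha hb)
    rw [kgen_mul_left S ha hb] at e1
    have e2 : kgen S 2 ![a, S.neg (S.mul a b)] = kgen S 2 ![a, b] := by
      rw [h3, kgen_mul_right S na hb, kgen_self_neg h hyp ha, zero_add]
    have e3 : kgen S 2 ![b, S.neg (S.mul a b)] = kgen S 2 ![b, a] := by
      rw [h6, kgen_mul_right S nb ha, kgen_self_neg h hyp hb, zero_add]
    rw [e2, e3] at e1
    exact eq_neg_of_add_eq_zero_left e1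
  · have ha2 : S.mul (S.neg S.one) (S.neg a) = a := by
      rw [aux_neg_one_mul hm, aux_neg_neg hm]
    have hv : (![a, a] : Fin 2 → F) = ![a, S.mul (S.neg S.one) (S.neg a)] := by
      rw [ha2]
    rw [hv, kgen_mul_right S n1 na, kgen_self_neg h hyp ha, add_zero]
end

section
/- Let F and L be hyperbolic hyperfields and φ : F → L a multiring morphism. Then φ induces a morphism of graded rings φ* : K*F → K*L with φ₀ = id_ℤ and φₙ(ρ(a₁)...ρ(aₙ)) = ρ(φ(a₁))...ρ(φ(aₙ)); moreover (ψ∘φ)* = ψ*∘φ*, id* = id, and if φ is surjective then φ* is surjective in each degree. -/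
/-!
Applying `φ` entrywise to tuples induces a map of free abelian groups, and it sends each
defining relation of `KₙF` to one of `KₙL`: degenerate tuples stay degenerate, and since a
morphism of hyperfields preserves nonzero elements, products and the sets `1 - a`, the
multilinearity and Steinberg relations are preserved too. Everything else holds because the
symbols `ρ(a₁)⋯ρ(aₙ)` generate `KₙF`, so maps out of it are determined on them.
-/

theorem Fin.comp_append {α β : Type*} {n m : ℕ} (f : α → β) (v : Fin n → α) (w : Fin m → α) :
    f ∘ Fin.append v w = Fin.append (f ∘ v) (f ∘ w) := by
  funext i
  refine i.addCases (fun i => ?_) (fun i => ?_) <;> simp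

theorem FreeAbelianGroup.map_surjective {α β : Type*} {f : α → β} (hf : Function.Surjective f) :
    Function.Surjective (FreeAbelianGroup.map f) := fun x =>
  ⟨FreeAbelianGroup.map (Function.surjInv hf) x, by
    rw [← FreeAbelianGroup.map_comp_apply, Function.comp_surjInv, FreeAbelianGroup.map_id_apply]⟩

namespace MulRingOps

open FreeAbelianGroup

variable {F L : Type*} {S : MulRingOps F} {T : MulRingOps L}

theorem IsHom.map_ne_zero (hS : S.IsHyperfield) (hT : T.IsHyperfield) {φ : F → L}
    (hφ : IsHom S T φ) {a : F} (ha : a ≠ S.zero) : φ a ≠ T.zero := by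
  obtain ⟨b, hb⟩ := hS.exists_inv a ha
  intro h
  have hmul : φ (S.mul a b) = T.mul (φ a) (φ b) := hφ.2.2.2.1 a b
  rw [hb, hφ.2.2.2.2, h, hT.mul_comm, hT.mul_zero] at hmul
  exact hT.zero_ne_one hmul.symm

theorem krel_le_comap_map (hS : S.IsHyperfield) (hT : T.IsHyperfield) {φ : F → L}
    (hφ : IsHom S T φ) (n : ℕ) : krel S n ≤ (krel T n).comap (map (φ ∘ ·)) := by
  rw [krel, AddSubgroup.closure_le]
  rintro x (⟨⟨v, ⟨i, hi⟩, rfl⟩ | ⟨v, i, b, c, hb, hc, rfl⟩⟩ | ⟨v, hv, ⟨i, j, hij, hmem⟩, rfl⟩) <;>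
    simp only [SetLike.mem_coe, AddSubgroup.mem_comap, map_sub, map_of_apply]
  · exact AddSubgroup.subset_closure (Or.inl (Or.inl
      ⟨φ ∘ v, ⟨i, by rw [Function.comp_apply, hi, hφ.2.2.1]⟩, rfl⟩))
  · refine AddSubgroup.subset_closure (Or.inl (Or.inr
      ⟨φ ∘ v, i, φ b, φ c, hφ.map_ne_zero hS hT hb, hφ.map_ne_zero hS hT hc, ?_⟩))
    rw [Function.comp_update, Function.comp_update, Function.comp_update, hφ.2.2.2.1]
  · refine AddSubgroup.subset_closure (Or.inr
      ⟨φ ∘ v, fun j => hφ.map_ne_zero hS hT (hv j), ⟨i, j, hij, ?_⟩, rfl⟩)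
    simpa only [Function.comp_apply, hφ.2.2.2.2, hφ.2.1] using hφ.1 hmem

def kmap (hS : S.IsHyperfield) (hT : T.IsHyperfield) {φ : F → L} (hφ : IsHom S T φ)
    (n : ℕ) : KGroup S n →+ KGroup T n :=
  QuotientAddGroup.map _ _ (map (φ ∘ ·)) (krel_le_comap_map hS hT hφ n)

theorem kmap_kgen (hS : S.IsHyperfield) (hT : T.IsHyperfield) {φ : F → L}
    (hφ : IsHom S T φ) (n : ℕ) (v : Fin n → F) :
    kmap hS hT hφ n (kgen S n v) = kgen T n (φ ∘ v) :=
  rfl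

theorem KGroup.hom_ext {n : ℕ} {G : Type*} [AddCommGroup G] {f g : KGroup S n →+ G}
    (h : ∀ v, f (kgen S n v) = g (kgen S n v)) : f = g :=
  QuotientAddGroup.addMonoidHom_ext _ (lift_ext (f.comp _) (g.comp _) h)

theorem eq_kmap_of_kgen (hS : S.IsHyperfield) (hT : T.IsHyperfield) {φ : F → L}
    (hφ : IsHom S T φ) {Φ : ∀ n, KGroup S n →+ KGroup T n}
    (hΦ : ∀ n v, Φ n (kgen S n v) = kgen T n (φ ∘ v)) : Φ = kmap hS hT hφ :=
  funext fun n => KGroup.hom_ext fun v => hΦ n v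

theorem kmap_surjective (hS : S.IsHyperfield) (hT : T.IsHyperfield) {φ : F → L}
    (hφ : IsHom S T φ) (hsurj : Function.Surjective φ) (n : ℕ) :
    Function.Surjective (kmap hS hT hφ n) :=
  QuotientAddGroup.map_surjective_of_surjective _ _ _
    (QuotientAddGroup.mk_surjective.comp (FreeAbelianGroup.map_surjective hsurj.comp_left)) _

end MulRingOps

open MulRingOps in
theorem ktheory_functorial_general {F L M : Type*}
    (S : MulRingOps F) (T : MulRingOps L) (U : MulRingOps M)
    (hS : S.IsHyperfield) (hT : T.IsHyperfield)
    (φ : F → L) (ψ : L → M) (hφ : IsHom S T φ) :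
    -- existence and uniqueness of the induced graded map, defined on generators
    (∃! Φ : ∀ n, KGroup S n →+ KGroup T n,
      ∀ (n : ℕ) (v : Fin n → F), Φ n (kgen S n v) = kgen T n (φ ∘ v)) ∧
    -- the induced maps form a morphism of graded rings: products of generators
    -- (concatenation) are preserved
    (∀ Φ : ∀ n, KGroup S n →+ KGroup T n,
      (∀ (n : ℕ) (v : Fin n → F), Φ n (kgen S n v) = kgen T n (φ ∘ v)) →
      ∀ (n m : ℕ) (v : Fin n → F) (w : Fin m → F),
        Φ (n + m) (kgen S (n + m) (Fin.append v w)) =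
          kgen T (n + m) (Fin.append (φ ∘ v) (φ ∘ w))) ∧
    -- functoriality: (ψ ∘ φ)* = ψ* ∘ φ*
    (∀ (Φ : ∀ n, KGroup S n →+ KGroup T n) (Ψ : ∀ n, KGroup T n →+ KGroup U n)
        (Θ : ∀ n, KGroup S n →+ KGroup U n),
      (∀ (n : ℕ) (v : Fin n → F), Φ n (kgen S n v) = kgen T n (φ ∘ v)) →
      (∀ (n : ℕ) (w : Fin n → L), Ψ n (kgen T n w) = kgen U n (ψ ∘ w)) →
      (∀ (n : ℕ) (v : Fin n → F), Θ n (kgen S n v) = kgen U n ((ψ ∘ φ) ∘ v)) →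
      ∀ (n : ℕ) (x : KGroup S n), Θ n x = Ψ n (Φ n x)) ∧
    -- id* = id
    (∀ Φ : ∀ n, KGroup S n →+ KGroup S n,
      (∀ (n : ℕ) (v : Fin n → F), Φ n (kgen S n v) = kgen S n (id ∘ v)) →
      ∀ (n : ℕ) (x : KGroup S n), Φ n x = x) ∧
    -- surjectivity
    (Function.Surjective φ →
      ∀ Φ : ∀ n, KGroup S n →+ KGroup T n,
        (∀ (n : ℕ) (v : Fin n → F), Φ n (kgen S n v) = kgen T n (φ ∘ v)) →
        ∀ n, Function.Surjective (Φ n)) := by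
  refine ⟨⟨kmap hS hT hφ, kmap_kgen hS hT hφ, fun Φ hΦ => eq_kmap_of_kgen hS hT hφ hΦ⟩,
    ?_, ?_, ?_, ?_⟩
  · intro Φ hΦ n m v w
    rw [hΦ, Fin.comp_append]
  · intro Φ Ψ Θ hΦ hΨ hΘ n
    refine DFunLike.congr_fun (KGroup.hom_ext fun v => ?_ : Θ n = (Ψ n).comp (Φ n))
    rw [AddMonoidHom.comp_apply, hΘ, hΦ, hΨ, Function.comp_assoc]
  · intro Φ hΦ n
    exact DFunLike.congr_fun (KGroup.hom_ext (hΦ n) : Φ n = AddMonoidHom.id _)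
  · intro hsurj Φ hΦ
    rw [eq_kmap_of_kgen hS hT hφ hΦ]
    exact kmap_surjective hS hT hφ hsurj

open MulRingOps in
/-- a morphism `φ : F → L` of hyperbolic hyperfields induces a morphism of
graded rings `φ* : K*F → K*L` with `φₙ(ρ(a₁)⋯ρ(aₙ)) = ρ(φ(a₁))⋯ρ(φ(aₙ))` (and `φ₀ = id`);
moreover `(ψ∘φ)* = ψ*∘φ*`, `id* = id`, and `φ*` is degreewise surjective when `φ` is. -/
theorem ktheory_functorial {F L M : Type*}
    (S : MulRingOps F) (T : MulRingOps L) (U : MulRingOps M)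
    (hS : S.IsHyperfield) (hT : T.IsHyperfield) (hU : U.IsHyperfield)
    (hSh : IsHyperbolic S) (hTh : IsHyperbolic T) (hUh : IsHyperbolic U)
    (φ : F → L) (ψ : L → M) (hφ : IsHom S T φ) (hψ : IsHom T U ψ) :
    -- existence and uniqueness of the induced graded map, defined on generators
    (∃! Φ : ∀ n, KGroup S n →+ KGroup T n,
      ∀ (n : ℕ) (v : Fin n → F), Φ n (kgen S n v) = kgen T n (φ ∘ v)) ∧
    -- the induced maps form a morphism of graded rings: products of generators
    -- (concatenation) are preserved
    (∀ Φ : ∀ n, KGroup S n →+ KGroup T n,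
      (∀ (n : ℕ) (v : Fin n → F), Φ n (kgen S n v) = kgen T n (φ ∘ v)) →
      ∀ (n m : ℕ) (v : Fin n → F) (w : Fin m → F),
        Φ (n + m) (kgen S (n + m) (Fin.append v w)) =
          kgen T (n + m) (Fin.append (φ ∘ v) (φ ∘ w))) ∧
    -- functoriality: (ψ ∘ φ)* = ψ* ∘ φ*
    (∀ (Φ : ∀ n, KGroup S n →+ KGroup T n) (Ψ : ∀ n, KGroup T n →+ KGroup U n)
        (Θ : ∀ n, KGroup S n →+ KGroup U n),
      (∀ (n : ℕ) (v : Fin n → F), Φ n (kgen S n v) = kgen T n (φ ∘ v)) →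
      (∀ (n : ℕ) (w : Fin n → L), Ψ n (kgen T n w) = kgen U n (ψ ∘ w)) →
      (∀ (n : ℕ) (v : Fin n → F), Θ n (kgen S n v) = kgen U n ((ψ ∘ φ) ∘ v)) →
      ∀ (n : ℕ) (x : KGroup S n), Θ n x = Ψ n (Φ n x)) ∧
    -- id* = id
    (∀ Φ : ∀ n, KGroup S n →+ KGroup S n,
      (∀ (n : ℕ) (v : Fin n → F), Φ n (kgen S n v) = kgen S n (id ∘ v)) →
      ∀ (n : ℕ) (x : KGroup S n), Φ n x = x) ∧
    -- surjectivity
    (Function.Surjective φ →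
      ∀ Φ : ∀ n, KGroup S n →+ KGroup T n,
        (∀ (n : ℕ) (v : Fin n → F), Φ n (kgen S n v) = kgen T n (φ ∘ v)) →
        ∀ n, Function.Surjective (Φ n)) :=
  ktheory_functorial_general S T U hS hT φ ψ hφ
end
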